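/- Under the saw map setup, for every γ with 0 < γ < p_{k*} (so that [0,γ] is a proper subsegment of J* containing 0), one has [0, γ] ⊆ T([0, γ]). -/

import Mathlib

/-- `T` is affine (linear) on the segment `[a, b]`. -/
def AffOn (T : ℝ → ℝ) (a b : ℝ) : Prop :=
  ∃ m c : ℝ, ∀ x ∈ Set.Icc a b, T x = m * x + c

/-- The "saw map" setup: sequences `q, r, p`, the map `T`, fixed points `e k ∈ (q (k+1), r k)`
and `ehat k ∈ (r k, q k)`, and the index `kstar`, subject to all standing assumptions. -/
structure SawMapSetup where
  q : ℕ → ℝ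
  r : ℕ → ℝ
  p : ℕ → ℝ
  T : ℝ → ℝ
  e : ℕ → ℝ
  ehat : ℕ → ℝ
  kstar : ℕ
  hq_pos : ∀ k, 1 ≤ k → 0 < q k
  hr_pos : ∀ k, 0 < r k
  hq1r0 : q 1 < r 0
  hrq : ∀ k, 1 ≤ k → r k < q k
  hqr : ∀ k, 1 ≤ k → q (k + 1) < r k
  hq_lim : Filter.Tendsto q Filter.atTop (nhds 0)
  hr_lim : Filter.Tendsto r Filter.atTop (nhds 0)
  hp_pos : ∀ k, 0 < p k
  hp_dec : ∀ k, p (k + 1) < p k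
  hp0r0 : p 0 < r 0
  hpr : ∀ k, 1 ≤ k → r k < p k
  hT0 : T 0 = 0
  hTq : ∀ k, 1 ≤ k → T (q k) = 0
  hTr : ∀ k, T (r k) = p k
  haff0 : AffOn T (q 1) (r 0)
  haff1 : ∀ k, 1 ≤ k → AffOn T (q (k + 1)) (r k)
  haff2 : ∀ k, 1 ≤ k → AffOn T (r k) (q k)
  hTJ : Set.MapsTo T (Set.Icc 0 (r 0)) (Set.Icc 0 (r 0))
  halpha1 : ∀ k, 1 ≤ k → 1 < p k / (r k - q (k + 1))
  he_mem : ∀ k, 1 ≤ k → e k ∈ Set.Ioo (q (k + 1)) (r k)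
  he_fix : ∀ k, 1 ≤ k → T (e k) = e k
  he_uniq : ∀ k, 1 ≤ k → ∀ x ∈ Set.Ioo (q (k + 1)) (r k), T x = x → x = e k
  hehat_mem : ∀ k, 1 ≤ k → ehat k ∈ Set.Ioo (r k) (q k)
  hehat_fix : ∀ k, 1 ≤ k → T (ehat k) = ehat k
  hehat_uniq : ∀ k, 1 ≤ k → ∀ x ∈ Set.Ioo (r k) (q k), T x = x → x = ehat k
  halpha_mono : ∀ k, p k / (r k - q (k + 1)) < p (k + 1) / (r (k + 1) - q (k + 2))
  hbeta_mono : ∀ k, 1 ≤ k → p k / (q k - r k) < p (k + 1) / (q (k + 1) - r (k + 1))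
  hkstar : 1 ≤ kstar
  hp_e_big : ∀ k, kstar + 1 ≤ k → e (k - 1) < p k
  hp_e_small : 2 ≤ kstar → ∀ k, 2 ≤ k → k ≤ kstar → p k < e (k - 1)
  htech : ∀ k, 1 ≤ k → k < kstar → p k < q k + e k / (p (k - 1) / (r (k - 1) - q k))

namespace SawMapSetup

variable (S : SawMapSetup)

/-- Absolute value of the slope of `T` on `[q (k+1), r k]`. -/
noncomputable def alpha (k : ℕ) : ℝ := S.p k / (S.r k - S.q (k + 1))

/-- Absolute value of the slope of `T` on `[r k, q k]`. -/
noncomputable def beta (k : ℕ) : ℝ := S.p k / (S.q k - S.r k)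

/-- The invariant segment `J* = [0, p kstar]`. -/
def Jstar : Set ℝ := Set.Icc 0 (S.p S.kstar)

/-- The segment `J_k = [e k, p k]`. -/
def Jk (k : ℕ) : Set ℝ := Set.Icc (S.e k) (S.p k)

/-- The segment `G_k = [T (p k), p k]`. -/
def Gk (k : ℕ) : Set ℝ := Set.Icc (S.T (S.p k)) (S.p k)

/-- The set `Ω` of points of `J*` that are eventually mapped to `0`. -/
def Omega : Set ℝ := {x | x ∈ S.Jstar ∧ ∃ n, 1 ≤ n ∧ S.T^[n] x = 0}

/-- The set `Σ`, the closure of `Ω`. -/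
def Sig : Set ℝ := closure S.Omega

end SawMapSetup

/-!
Since `r k → 0`, a given `γ ∈ (0, p kstar)` lies in `(r (k+1), r k]` for some `k`. On the increasing
branch `[q (k+2), r (k+1)] ⊆ [0, γ]` the map `T` runs continuously from `0` to `p (k+1)`, which settles
the case `γ ≤ p (k+1)`. Otherwise `k+1 > kstar`, so `e k < p (k+1) < γ ≤ r k`; on the branch
`[q (k+1), r k]` the affine map `T` vanishes at `q (k+1)` and fixes `e k`, hence has slope at least `1`
and satisfies `T γ ≥ γ`, and again the intermediate value theorem covers `[0, γ]`.
-/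

open Set

theorem exists_succ_lt_le_of_exists_lt {α : Type*} [LinearOrder α] {u : ℕ → α} {γ : α}
    (h₀ : γ ≤ u 0) (h : ∃ n, u n < γ) : ∃ k, u (k + 1) < γ ∧ γ ≤ u k := by
  by_contra! hstep
  obtain ⟨n, hn⟩ := h
  have hle : ∀ n, γ ≤ u n := fun n => by
    induction n with
    | zero => exact h₀
    | succ k ih => exact not_lt.mp fun hlt => (hstep k hlt).not_ge ih
  exact (hle n).not_gt hn

theorem AffOn.continuousOn {T : ℝ → ℝ} {a b : ℝ} (h : AffOn T a b) :
    ContinuousOn T (Icc a b) := by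
  obtain ⟨m, c, hT⟩ := h
  exact (continuous_const.mul continuous_id |>.add continuous_const).continuousOn.congr hT

theorem AffOn.mono {T : ℝ → ℝ} {a b a' b' : ℝ} (h : AffOn T a b) (ha : a ≤ a') (hb : b' ≤ b) :
    AffOn T a' b' := by
  obtain ⟨m, c, hT⟩ := h
  exact ⟨m, c, fun x hx => hT x (Icc_subset_Icc ha hb hx)⟩

theorem AffOn.le_apply_of_apply_eq_self {T : ℝ → ℝ} {a b e x : ℝ} (h : AffOn T a b)
    (hae : a < e) (hex : e ≤ x) (hxb : x ≤ b) (hTa : T a ≤ a) (hTe : T e = e) : x ≤ T x := by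
  obtain ⟨m, c, hT⟩ := h
  have ha := hT a ⟨le_rfl, by linarith⟩
  have he := hT e ⟨hae.le, by linarith⟩
  have hx := hT x ⟨by linarith, hxb⟩
  nlinarith

theorem Icc_zero_subset_image_of_continuousOn {T : ℝ → ℝ} {a b γ : ℝ} (hab : a ≤ b)
    (ha : 0 ≤ a) (hbγ : b ≤ γ) (hT : ContinuousOn T (Icc a b)) (hTa : T a = 0)
    (hTb : γ ≤ T b) : Icc 0 γ ⊆ T '' Icc 0 γ :=
  calc Icc 0 γ ⊆ Icc (T a) (T b) := hTa ▸ Icc_subset_Icc_right hTb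
    _ ⊆ T '' Icc a b := intermediate_value_Icc hab hT
    _ ⊆ T '' Icc 0 γ := image_mono (Icc_subset_Icc ha hbγ)

namespace SawMapSetup

variable (S : SawMapSetup)

theorem p_antitone : Antitone S.p :=
  (strictAnti_nat_of_succ_lt S.hp_dec).antitone

theorem Icc_zero_subset_image_of_r_le_of_le_p {k : ℕ} (hk : 1 ≤ k) {γ : ℝ}
    (hrγ : S.r k ≤ γ) (hγp : γ ≤ S.p k) : Icc 0 γ ⊆ S.T '' Icc 0 γ := by
  rw [← S.hTr k] at hγp
  exact Icc_zero_subset_image_of_continuousOn (S.hqr k hk).le (S.hq_pos (k + 1) (by omega)).le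
    hrγ (S.haff1 k hk).continuousOn (S.hTq (k + 1) (by omega)) hγp

theorem Icc_zero_subset_image_of_e_le_of_le_r {k : ℕ} (hk : 1 ≤ k) {γ : ℝ}
    (heγ : S.e k ≤ γ) (hγr : γ ≤ S.r k) : Icc 0 γ ⊆ S.T '' Icc 0 γ := by
  have hqe : S.q (k + 1) < S.e k := (S.he_mem k hk).1
  have hq : 0 < S.q (k + 1) := S.hq_pos (k + 1) (by omega)
  have hTq : S.T (S.q (k + 1)) = 0 := S.hTq (k + 1) (by omega)
  have hγTγ : γ ≤ S.T γ := (S.haff1 k hk).le_apply_of_apply_eq_self hqe heγ hγr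
    (hTq ▸ hq.le) (S.he_fix k hk)
  exact Icc_zero_subset_image_of_continuousOn (by linarith) hq.le le_rfl
    ((S.haff1 k hk).mono le_rfl hγr).continuousOn hTq hγTγ

end SawMapSetup

/-- Under the saw map setup, for every `γ` with `0 < γ < p kstar` one has
`[0, γ] ⊆ T([0, γ])`. -/
theorem subsegment_expansion (S : SawMapSetup) :
    ∀ γ : ℝ, 0 < γ → γ < S.p S.kstar →
      Set.Icc 0 γ ⊆ S.T '' Set.Icc 0 γ := by
  intro γ hγ0 hγp
  have hγr₀ : γ ≤ S.r 0 := (hγp.trans_le (S.p_antitone (Nat.zero_le _))).le.trans S.hp0r0.le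
  obtain ⟨k, hrγ, hγr⟩ :=
    exists_succ_lt_le_of_exists_lt hγr₀ (S.hr_lim.eventually_lt_const hγ0).exists
  rcases le_or_gt γ (S.p (k + 1)) with hγp' | hpγ
  · exact S.Icc_zero_subset_image_of_r_le_of_le_p (by omega) hrγ.le hγp'
  · have hkstar : S.kstar < k + 1 := by
      by_contra! h
      exact (hγp.trans_le (S.p_antitone h)).not_gt hpγ
    have hep : S.e k < S.p (k + 1) := by simpa using S.hp_e_big (k + 1) hkstar
    exact S.Icc_zero_subset_image_of_e_le_of_le_r (by linarith [S.hkstar]) (hep.trans hpγ).le hγr
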